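/- arXiv:1405.3532 — 2 statements merged into one kernel-verified Lean document; each statement's English description precedes it below -/
import Mathlib

section
/- Let A : ℕ → ℤ be defined by A(0) = 0 and, for ℓ ≥ 0 and 0 ≤ r ≤ 2^ℓ − 1, A(2^ℓ + r) = A(r) + 1 if 2r ≤ 2^ℓ and A(2^ℓ + r) = A(2^{ℓ+1} − r) if 2r > 2^ℓ. Then for all n ≥ 0: A(2n) = A(n), A(8n+1) = A(4n+1), A(8n+3) = A(2n+1) + 1, A(8n+5) = A(2n+1) + 1, A(8n+7) = A(4n+3). In particular, A is 2-regular. -/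
/-- The 2-kernel of a sequence `s : ℕ → ℤ`. -/
def kernel2 (s : ℕ → ℤ) : Set (ℕ → ℤ) :=
  {t | ∃ i j : ℕ, j < 2 ^ i ∧ t = fun n => s (2 ^ i * n + j)}

/-- A sequence is 2-regular if the ℤ-module spanned by its 2-kernel is finitely generated. -/
def IsTwoRegular (s : ℕ → ℤ) : Prop :=
  (Submodule.span ℤ (kernel2 s)).FG

/-!
Write `n = 2 ^ l + r` with `r < 2 ^ l`. The recursion adds `1` on the lower half of the dyadic
block `[2 ^ l, 2 ^ (l + 1))` and reflects the upper half onto the block's lower part. For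
`0 < c < 2 ^ k` the number `2 ^ k * n + c` lies in the lower half of its block exactly when `n`
does (once `l ≠ 0`), and its reflection is `2 ^ k * (2 ^ (l + 1) - 1 - r) + (2 ^ k - c)`. Hence an
identity `A (2 ^ k * n + c) = A (2 ^ k' * n + c') + δ` reduces either to itself at `r` or to its
mirror image (`c ↦ 2 ^ k - c`, `c' ↦ 2 ^ k' - c'`) at a smaller argument, and strong induction
proves it together with its mirror image. The identities for `8n+1, 8n+7` and for `8n+3, 8n+5`
are two such mirror pairs. They show that the span of `A`, `A (2n+1)`, `A (4n+1)`, `A (4n+3)`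
and `1` is stable under `n ↦ 2n` and `n ↦ 2n+1`, which bounds the span of the 2-kernel.
-/

theorem isTwoRegular_of_subset_span {s : ℕ → ℤ} {G : Set (ℕ → ℤ)} (hG : G.Finite) (hs : s ∈ G)
    (hstable : ∀ t ∈ G, ∀ b < 2, (fun n => t (2 * n + b)) ∈ Submodule.span ℤ G) :
    IsTwoRegular s := by
  set M := Submodule.span ℤ G
  have hsection : ∀ b < 2, ∀ t ∈ M, (fun n => t (2 * n + b)) ∈ M := fun b hb =>
    Submodule.span_le (p := M.comap (LinearMap.funLeft ℤ ℤ (fun n => 2 * n + b))).mpr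
      (fun t ht => hstable t ht b hb)
  have hkernel : ∀ i, ∀ t ∈ M, ∀ j < 2 ^ i, (fun n => t (2 ^ i * n + j)) ∈ M := by
    intro i
    induction i with
    | zero => intro t ht j hj; simpa [Nat.lt_one_iff.mp hj] using ht
    | succ i ih =>
      intro t ht j hj
      convert ih _ (hsection (j % 2) (Nat.mod_lt j two_pos) t ht) (j / 2) (by omega) using 2 with n
      rw [pow_succ]
      congr 1
      nth_rw 1 [← Nat.div_add_mod j 2]
      ring
  refine (Submodule.fg_span hG).of_le (Submodule.span_le.mpr ?_)
  rintro t ⟨i, j, hj, rfl⟩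
  exact hkernel i s (Submodule.subset_span hs) j hj

def SatisfiesMirrorRec (A : ℕ → ℤ) : Prop :=
  ∀ l r : ℕ, r < 2 ^ l → A (2 ^ l + r) = if 2 * r ≤ 2 ^ l then A r + 1 else A (2 ^ (l + 1) - r)

lemma exists_eq_two_pow_add {n : ℕ} (hn : n ≠ 0) : ∃ l r, r < 2 ^ l ∧ n = 2 ^ l + r := by
  have hle := Nat.pow_log_le_self 2 hn
  have hlt := Nat.lt_pow_succ_log_self one_lt_two n
  rw [pow_succ] at hlt
  exact ⟨Nat.log 2 n, n - 2 ^ Nat.log 2 n, by omega, by omega⟩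

namespace SatisfiesMirrorRec

variable {A : ℕ → ℤ}

theorem apply_two_mul (h : SatisfiesMirrorRec A) (n : ℕ) : A (2 * n) = A n := by
  induction n using Nat.strong_induction_on with
  | _ n ih =>
    rcases eq_or_ne n 0 with rfl | hn
    · rfl
    obtain ⟨l, r, hr, rfl⟩ := exists_eq_two_pow_add hn
    rw [h l r hr, show 2 * (2 ^ l + r) = 2 ^ (l + 1) + 2 * r by ring, h (l + 1) (2 * r) (by omega)]
    by_cases hhalf : 2 * r ≤ 2 ^ l
    · rw [if_pos (by omega), if_pos hhalf, ih r (by omega)]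
    · rw [if_neg (by omega), if_neg hhalf,
        show 2 ^ (l + 1 + 1) - 2 * r = 2 * (2 ^ (l + 1) - r) by omega, ih _ (by omega)]

theorem apply_two_pow_mul_add (h : SatisfiesMirrorRec A) {k l r c : ℕ} (hl : l ≠ 0)
    (hr : r < 2 ^ l) (hc₀ : 0 < c) (hc : c < 2 ^ k) :
    A (2 ^ k * (2 ^ l + r) + c) = if 2 * r < 2 ^ l then A (2 ^ k * r + c) + 1
      else A (2 ^ k * (2 ^ (l + 1) - 1 - r) + (2 ^ k - c)) := by
  obtain ⟨L, hL⟩ : 2 ∣ 2 ^ l := dvd_pow_self 2 hl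
  have hbound : 2 ^ k * r + c < 2 ^ (l + k) := by rw [pow_add]; nlinarith
  rw [show 2 ^ k * (2 ^ l + r) + c = 2 ^ (l + k) + (2 ^ k * r + c) by ring, h _ _ hbound]
  have hpow : 2 ^ (l + k) = 2 * L * 2 ^ k := by rw [pow_add, hL]
  by_cases hhalf : 2 * r < 2 ^ l
  · have hrL : r + 1 ≤ L := by omega
    rw [if_pos (by rw [hpow]; nlinarith), if_pos hhalf]
  · rw [if_neg (by rw [hpow]; nlinarith), if_neg hhalf]
    congr 1
    have hone : 1 ≤ 2 ^ (l + 1) := Nat.one_le_two_pow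
    have hrL : r ≤ 2 ^ (l + 1) - 1 := by rw [pow_succ]; omega
    have hsub : 2 ^ k * r + c ≤ 2 ^ (l + k + 1) := by rw [pow_succ]; omega
    zify [hone, hrL, hsub, hc.le]
    push_cast [pow_succ, pow_add]
    ring

theorem apply_eq_of_mirror (h : SatisfiesMirrorRec A) {k k' c c' n : ℕ} {δ : ℤ}
    (hc₀ : 0 < c) (hc : c < 2 ^ k) (hc₀' : 0 < c') (hc' : c' < 2 ^ k') (hn : 2 ≤ n)
    (ih : ∀ m < n, A (2 ^ k * m + c) = A (2 ^ k' * m + c') + δ ∧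
      A (2 ^ k * m + (2 ^ k - c)) = A (2 ^ k' * m + (2 ^ k' - c')) + δ) :
    A (2 ^ k * n + c) = A (2 ^ k' * n + c') + δ := by
  obtain ⟨l, r, hr, rfl⟩ := exists_eq_two_pow_add (by omega : n ≠ 0)
  have hl : l ≠ 0 := by rintro rfl; omega
  rw [h.apply_two_pow_mul_add hl hr hc₀ hc, h.apply_two_pow_mul_add hl hr hc₀' hc']
  split_ifs with hhalf
  · rw [(ih r (by omega)).1]; ring
  · exact (ih _ (by omega)).2

theorem apply_eq_and_mirror (h : SatisfiesMirrorRec A) {k k' c c' : ℕ} {δ : ℤ}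
    (hc₀ : 0 < c) (hc : c < 2 ^ k) (hc₀' : 0 < c') (hc' : c' < 2 ^ k')
    (h₀ : A c = A c' + δ ∧ A (2 ^ k - c) = A (2 ^ k' - c') + δ)
    (h₁ : A (2 ^ k + c) = A (2 ^ k' + c') + δ ∧
      A (2 ^ k + (2 ^ k - c)) = A (2 ^ k' + (2 ^ k' - c')) + δ) (n : ℕ) :
    A (2 ^ k * n + c) = A (2 ^ k' * n + c') + δ ∧
      A (2 ^ k * n + (2 ^ k - c)) = A (2 ^ k' * n + (2 ^ k' - c')) + δ := by
  induction n using Nat.strong_induction_on with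
  | _ n ih =>
    match n, ih with
    | 0, _ => simpa using h₀
    | 1, _ => simpa using h₁
    | n + 2, ih =>
      refine ⟨h.apply_eq_of_mirror hc₀ hc hc₀' hc' (by omega) ih,
        h.apply_eq_of_mirror (by omega) (by omega) (by omega) (by omega) (by omega) ?_⟩
      intro m hm
      rw [Nat.sub_sub_self hc.le, Nat.sub_sub_self hc'.le]
      exact (ih m hm).symm

theorem apply_small (h : SatisfiesMirrorRec A) :
    A 3 = A 1 + 1 ∧ A 5 = A 1 + 1 ∧ A 7 = A 1 + 1 ∧ A 9 = A 1 + 1 ∧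
      A 11 = A 1 + 2 ∧ A 13 = A 1 + 2 ∧ A 15 = A 1 + 1 := by
  have h3 := h 1 1 (by norm_num)
  have h5 := h 2 1 (by norm_num)
  have h7 := h 2 3 (by norm_num)
  have h9 := h 3 1 (by norm_num)
  have h11 := h 3 3 (by norm_num)
  have h13 := h 3 5 (by norm_num)
  have h15 := h 3 7 (by norm_num)
  norm_num at h3 h5 h7 h9 h11 h13 h15
  refine ⟨h3, h5, ?_, h9, ?_, ?_, ?_⟩ <;> linarith

theorem apply_eight_mul_add_one_and_seven (h : SatisfiesMirrorRec A) (n : ℕ) :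
    A (8 * n + 1) = A (4 * n + 1) ∧ A (8 * n + 7) = A (4 * n + 3) := by
  obtain ⟨h3, h5, h7, h9, -, -, h15⟩ := h.apply_small
  simpa using h.apply_eq_and_mirror (k := 3) (c := 1) (k' := 2) (c' := 1) (δ := 0)
    (by norm_num) (by norm_num) (by norm_num) (by norm_num)
    (by norm_num; linarith) (by norm_num; constructor <;> linarith) n

theorem apply_eight_mul_add_three_and_five (h : SatisfiesMirrorRec A) (n : ℕ) :
    A (8 * n + 3) = A (2 * n + 1) + 1 ∧ A (8 * n + 5) = A (2 * n + 1) + 1 := by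
  obtain ⟨h3, h5, -, -, h11, h13, -⟩ := h.apply_small
  simpa using h.apply_eq_and_mirror (k := 3) (c := 3) (k' := 1) (c' := 1) (δ := 1)
    (by norm_num) (by norm_num) (by norm_num) (by norm_num)
    (by norm_num; constructor <;> linarith) (by norm_num; constructor <;> linarith) n

theorem isTwoRegular (h : SatisfiesMirrorRec A) : IsTwoRegular A := by
  set G : Set (ℕ → ℤ) :=
    {A, fun n => A (2 * n + 1), fun n => A (4 * n + 1), fun n => A (4 * n + 3), 1} with hG
  have mem : ∀ t ∈ G, t ∈ Submodule.span ℤ G := fun t ht => Submodule.subset_span ht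
  have mem_add_one : (fun n => A (2 * n + 1) + 1) ∈ Submodule.span ℤ G :=
    add_mem (mem _ (by simp [G])) (mem 1 (by simp [G]))
  refine isTwoRegular_of_subset_span (Set.toFinite G) (by simp [G]) ?_
  simp only [hG, Set.mem_insert_iff, Set.mem_singleton_iff]
  rintro t (ht | ht | ht | ht | ht) b hb <;> subst t <;> interval_cases b
  · simpa [h.apply_two_mul] using mem A (by simp [G])
  · exact mem _ (by simp [G])
  · convert mem (fun n => A (4 * n + 1)) (by simp [G]) using 2 with n; ring_nf
  · convert mem (fun n => A (4 * n + 3)) (by simp [G]) using 2 with n; ring_nf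
  · convert mem (fun n => A (4 * n + 1)) (by simp [G]) using 2 with n
    rw [← (h.apply_eight_mul_add_one_and_seven n).1]; ring_nf
  · convert mem_add_one using 2 with n
    rw [← (h.apply_eight_mul_add_three_and_five n).2]; ring_nf
  · convert mem_add_one using 2 with n
    rw [← (h.apply_eight_mul_add_three_and_five n).1]; ring_nf
  · convert mem (fun n => A (4 * n + 3)) (by simp [G]) using 2 with n
    rw [← (h.apply_eight_mul_add_one_and_seven n).2]; ring_nf
  · exact mem 1 (by simp [G])
  · exact mem 1 (by simp [G])

end SatisfiesMirrorRec

theorem stmt1_general (A : ℕ → ℤ)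
    (hArec : ∀ l r : ℕ, r < 2 ^ l →
      A (2 ^ l + r) = if 2 * r ≤ 2 ^ l then A r + 1 else A (2 ^ (l + 1) - r)) :
    (∀ n, A (2 * n) = A n) ∧
    (∀ n, A (8 * n + 1) = A (4 * n + 1)) ∧
    (∀ n, A (8 * n + 3) = A (2 * n + 1) + 1) ∧
    (∀ n, A (8 * n + 5) = A (2 * n + 1) + 1) ∧
    (∀ n, A (8 * n + 7) = A (4 * n + 3)) ∧
    IsTwoRegular A := by
  have h : SatisfiesMirrorRec A := hArec
  exact ⟨h.apply_two_mul, fun n => (h.apply_eight_mul_add_one_and_seven n).1,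
    fun n => (h.apply_eight_mul_add_three_and_five n).1,
    fun n => (h.apply_eight_mul_add_three_and_five n).2,
    fun n => (h.apply_eight_mul_add_one_and_seven n).2, h.isTwoRegular⟩

theorem stmt1 (A : ℕ → ℤ) (hA0 : A 0 = 0)
    (hArec : ∀ l r : ℕ, r < 2 ^ l →
      A (2 ^ l + r) = if 2 * r ≤ 2 ^ l then A r + 1 else A (2 ^ (l + 1) - r)) :
    (∀ n, A (2 * n) = A n) ∧
    (∀ n, A (8 * n + 1) = A (4 * n + 1)) ∧
    (∀ n, A (8 * n + 3) = A (2 * n + 1) + 1) ∧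
    (∀ n, A (8 * n + 5) = A (2 * n + 1) + 1) ∧
    (∀ n, A (8 * n + 7) = A (4 * n + 3)) ∧
    IsTwoRegular A :=
  stmt1_general A hArec
end

section
/- For all n ∈ ℕ, the abelian complexity of x satisfies: P¹_x(n) = (3/2)·Δ₀(n) + 3/2 if Δ₀(n) is odd; P¹_x(n) = (3/2)·Δ₀(n) + 1 if Δ₀(n) is even and n − m₀(n) is even; P¹_x(n) = (3/2)·Δ₀(n) + 2 if Δ₀(n) is even and n − m₀(n) is odd. -/
/-- A sequence is 2-automatic if its 2-kernel is finite. -/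
def IsTwoAutomatic (s : ℕ → ℤ) : Prop :=
  (kernel2 s).Finite

/-- The period-doubling word, fixed point (starting with 0) of 0 ↦ 01, 1 ↦ 00:
its `n`-th letter is the parity of the 2-adic valuation of `n+1`. -/
def pd (n : ℕ) : ℕ := (n + 1).factorization 2 % 2

/-- The Thue–Morse word, fixed point (starting with 0) of 0 ↦ 01, 1 ↦ 10:
its `n`-th letter is the parity of the binary digit sum of `n`. -/
def tm (n : ℕ) : ℕ := (Nat.digits 2 n).sum % 2

/-- The 2-block coding `x = block(p, 2)` of the period-doubling word. -/
def xw (n : ℕ) : ℕ := 2 * pd n + pd (n + 1)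

/-- The 2-block coding `y = block(t, 2)` of the Thue–Morse word. -/
def yw (n : ℕ) : ℕ := 2 * tm n + tm (n + 1)

/-- The factor of an infinite word `w` of length `len` occurring at position `i`. -/
def factorAt (w : ℕ → ℕ) (i len : ℕ) : List ℕ :=
  (List.range len).map fun k => w (i + k)

/-- `u` is a factor of the infinite word `w`. -/
def IsFactor (w : ℕ → ℕ) (u : List ℕ) : Prop :=
  ∃ i, u = factorAt w i u.length

/-- Maximal number of 0's in a factor of `x` of length `n`. -/
noncomputable def M0 (n : ℕ) : ℕ := sSup {k | ∃ i, (factorAt xw i n).count 0 = k}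

/-- Minimal number of 0's in a factor of `x` of length `n`. -/
noncomputable def m0 (n : ℕ) : ℕ := sInf {k | ∃ i, (factorAt xw i n).count 0 = k}

noncomputable def D0 (n : ℕ) : ℕ := M0 n - m0 n

/-- Maximal number of 2's in a factor of `x` of length `n`. -/
noncomputable def M2c (n : ℕ) : ℕ := sSup {k | ∃ i, (factorAt xw i n).count 2 = k}

/-- Minimal number of 2's in a factor of `x` of length `n`. -/
noncomputable def m2c (n : ℕ) : ℕ := sInf {k | ∃ i, (factorAt xw i n).count 2 = k}

/-- The max-jump function for `M0`. -/
noncomputable def JM0 : ℕ → ℕ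
  | 0 => 0
  | n + 1 => if M0 n < M0 (n + 1) then 1 else 0

/-- The min-jump function for `m0`. -/
noncomputable def jm0 (n : ℕ) : ℕ := if m0 n < m0 (n + 1) then 1 else 0

/-- Maximal total number of 1's and 2's in a factor of `y` of length `n`. -/
noncomputable def M12 (n : ℕ) : ℕ :=
  sSup {k | ∃ i, (factorAt yw i n).count 1 + (factorAt yw i n).count 2 = k}

/-- Minimal total number of 1's and 2's in a factor of `y` of length `n`. -/
noncomputable def m12 (n : ℕ) : ℕ :=
  sInf {k | ∃ i, (factorAt yw i n).count 1 + (factorAt yw i n).count 2 = k}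

noncomputable def D12 (n : ℕ) : ℕ := M12 n - m12 n

/-- Maximal total number of 0's and 3's in a factor of `y` of length `n`. -/
noncomputable def M03 (n : ℕ) : ℕ :=
  sSup {k | ∃ i, (factorAt yw i n).count 0 + (factorAt yw i n).count 3 = k}

/-- Minimal total number of 0's and 3's in a factor of `y` of length `n`. -/
noncomputable def m03 (n : ℕ) : ℕ :=
  sInf {k | ∃ i, (factorAt yw i n).count 0 + (factorAt yw i n).count 3 = k}

/-- The max-jump function for `M03`. -/
noncomputable def JM03 (n : ℕ) : ℕ := if M03 (n - 1) < M03 n then 1 else 0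

/-- The min-jump function for `m03`. -/
noncomputable def jm03 (n : ℕ) : ℕ := if m03 n < m03 (n + 1) then 1 else 0

/-- Abelian complexity: the number of abelian equivalence classes (i.e. distinct
multisets of letters) of factors of `w` of length `n`. -/
noncomputable def abComplexity (w : ℕ → ℕ) (n : ℕ) : ℕ :=
  Set.ncard {m : Multiset ℕ | ∃ i, (↑(factorAt w i n) : Multiset ℕ) = m}

/-- The number of occurrences of `v` as a factor of `u`. -/
def countFactor (u v : List ℕ) : ℕ :=
  ((List.range (u.length + 1 - v.length)).filter
    fun i => decide ((u.drop i).take v.length = v)).length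

/-- 2-abelian complexity: the number of 2-abelian equivalence classes of factors of `w`
of length `n`, where two words are 2-abelian equivalent when every word of length at most 2
occurs equally often in both. -/
noncomputable def abel2Complexity (w : ℕ → ℕ) (n : ℕ) : ℕ :=
  Set.ncard {f : List ℕ → ℕ |
    ∃ i, f = fun v => if v.length ≤ 2 then countFactor (factorAt w i n) v else 0}

/-- The morphism φ : 0 ↦ 12, 1 ↦ 12, 2 ↦ 00. -/
def phiL : ℕ → List ℕ
  | 0 => [1, 2]
  | 1 => [1, 2]
  | 2 => [0, 0]
  | _ => []

/-- The morphism τ : 0 ↦ 0, 1 ↦ 2, 2 ↦ 1. -/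
def tauL : ℕ → ℕ
  | 1 => 2
  | 2 => 1
  | n => n

/-!
The abelian class of a factor `u` of `x` of length `n` is determined by `|u|₀ - |u|₂`: since a `1`
in `x` is always followed by a `2`, `|u|₁ - |u|₂ ∈ {-1, 0, 1}`, so
`2 (|u|₀ - |u|₂) = 3 |u|₀ + (|u|₁ - |u|₂) - n` determines `|u|₀` and `|u|₁ - |u|₂`. The number of `0`s takes every value between
`m₀(n)` and `M₀(n)` (sliding the window changes it by at most one), and since the prefixes of
length `2ˢ - 1` of `p` are palindromes, `τ` of the mirror image of a factor is again a factor;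
it has the same number of `0`s and swaps `|u|₁` and `|u|₂`. Hence `|u|₀ - |u|₂` ranges over a
whole interval of integers, whose length gives the formula.
-/

section Factors

variable (w : ℕ → ℕ)

lemma length_factorAt (i n : ℕ) : (factorAt w i n).length = n := by
  simp [factorAt]

lemma factorAt_succ (i n : ℕ) : factorAt w i (n + 1) = factorAt w i n ++ [w (i + n)] := by
  simp [factorAt, List.range_succ]

lemma factorAt_succ' (i n : ℕ) : factorAt w i (n + 1) = w i :: factorAt w (i + 1) n := by
  simp [factorAt, List.range_succ_eq_map, Nat.add_right_comm _ 1, Nat.add_assoc]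

lemma abs_count_factorAt_succ_sub_le (a i n : ℕ) :
    |((factorAt w (i + 1) n).count a : ℤ) - (factorAt w i n).count a| ≤ 1 := by
  have h := congrArg (List.count a) ((factorAt_succ w i n).symm.trans (factorAt_succ' w i n))
  simp only [List.count_append, List.count_cons, List.count_nil] at h
  rw [abs_le]
  constructor <;> split_ifs at h <;> omega

lemma count_factorAt_eq_count_factorAt_succ {a b : ℕ} (h : ∀ j, w j = a ↔ w (j + 1) = b)
    (i n : ℕ) : (factorAt w i n).count a = (factorAt w (i + 1) n).count b := by
  simp only [factorAt, List.count_eq_countP, List.countP_map]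
  refine List.countP_congr fun k _ => ?_
  simp [h, Nat.add_right_comm]

lemma count_factorAt_le (a i n : ℕ) : (factorAt w i n).count a ≤ n :=
  List.count_le_length.trans (length_factorAt w i n).le

lemma factorAt_eq_reverse_map {f : ℕ → ℕ} {i j n : ℕ}
    (h : ∀ k < n, w (j + k) = f (w (i + (n - 1 - k)))) :
    factorAt w j n = ((factorAt w i n).map f).reverse := by
  refine List.ext_getElem (by simp [length_factorAt]) fun k hk _ => ?_
  rw [length_factorAt] at hk
  simp [factorAt, List.getElem_reverse, h k hk]

end Factors

theorem exists_eq_of_abs_sub_succ_le_one {f : ℕ → ℤ} (hf : ∀ i, |f (i + 1) - f i| ≤ 1)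
    {p q : ℕ} {c : ℤ} (hp : f p ≤ c) (hq : c ≤ f q) : ∃ i, f i = c := by
  have up : ∀ {g : ℕ → ℤ}, (∀ i, g (i + 1) ≤ g i + 1) →
      ∀ {p q : ℕ}, p ≤ q → g p ≤ c → c ≤ g q → ∃ i, g i = c := by
    intro g hg p q hpq hp hq
    induction q, hpq using Nat.le_induction with
    | base => exact ⟨p, le_antisymm hp hq⟩
    | succ q _ ih =>
      by_cases hc : c ≤ g q
      · exact ih hc
      · exact ⟨q + 1, by have := hg q; omega⟩
  rcases le_total p q with hpq | hqp
  · exact up (fun i => by have := abs_le.mp (hf i); omega) hpq hp hq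
  · obtain ⟨i, hi⟩ := up (g := fun i => 2 * c - f i)
      (fun i => by have := abs_le.mp (hf i); omega) hqp (by omega) (by omega)
    exact ⟨i, by omega⟩

lemma count_zero_add_count_one_add_count_two {l : List ℕ} (hl : ∀ b ∈ l, b ≤ 2) :
    l.count 0 + l.count 1 + l.count 2 = l.length := by
  induction l with
  | nil => rfl
  | cons b l ih =>
    have hb := hl b List.mem_cons_self
    have := ih fun c hc => hl c (List.mem_cons_of_mem b hc)
    simp only [List.count_cons, List.length_cons]
    interval_cases b <;> simp <;> omega

lemma coe_eq_coe_of_count_eq {l l' : List ℕ} (hl : ∀ b ∈ l, b ≤ 2) (hl' : ∀ b ∈ l', b ≤ 2)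
    (h0 : l.count 0 = l'.count 0) (h1 : l.count 1 = l'.count 1) (h2 : l.count 2 = l'.count 2) :
    (l : Multiset ℕ) = l' := by
  refine Multiset.coe_eq_coe.mpr (List.perm_iff_count.mpr fun a => ?_)
  rcases (by omega : a = 0 ∨ a = 1 ∨ a = 2 ∨ 3 ≤ a) with rfl | rfl | rfl | ha
  · exact h0
  · exact h1
  · exact h2
  · rw [List.count_eq_zero_of_not_mem fun h => by have := hl a h; omega,
      List.count_eq_zero_of_not_mem fun h => by have := hl' a h; omega]

section PeriodDoubling

lemma pd_le_one (n : ℕ) : pd n ≤ 1 := Nat.le_of_lt_succ (Nat.mod_lt _ two_pos)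

lemma pd_two_mul (n : ℕ) : pd (2 * n) = 0 := by
  rw [pd, Nat.factorization_eq_zero_of_not_dvd (by omega)]

lemma pd_eq_zero_or_pd_succ_eq_zero (n : ℕ) : pd n = 0 ∨ pd (n + 1) = 0 := by
  rcases Nat.even_or_odd' n with ⟨m, rfl | rfl⟩
  · exact Or.inl (pd_two_mul m)
  · exact Or.inr (by rw [show 2 * m + 1 + 1 = 2 * (m + 1) by ring, pd_two_mul])

lemma factorization_two_pow_sub {s a : ℕ} (ha : 0 < a) (has : a < 2 ^ s) :
    (2 ^ s - a).factorization 2 = a.factorization 2 := by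
  induction s generalizing a with
  | zero => omega
  | succ s ih =>
    rcases Nat.even_or_odd' a with ⟨b, rfl | rfl⟩
    · have hb : b < 2 ^ s := by rw [pow_succ] at has; omega
      rw [show 2 ^ (s + 1) - 2 * b = 2 * (2 ^ s - b) by rw [pow_succ]; omega,
        Nat.factorization_mul two_ne_zero (by omega), Nat.factorization_mul two_ne_zero (by omega),
        Finsupp.add_apply, Finsupp.add_apply, ih (by omega) hb]
    · have h2 : 2 ∣ 2 ^ (s + 1) := dvd_pow_self 2 s.succ_ne_zero
      rw [Nat.factorization_eq_zero_of_not_dvd (by omega),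
        Nat.factorization_eq_zero_of_not_dvd (by omega)]

lemma pd_two_pow_sub {s k : ℕ} (hk : k + 2 ≤ 2 ^ s) : pd (2 ^ s - 2 - k) = pd k := by
  rw [pd, pd, show 2 ^ s - 2 - k + 1 = 2 ^ s - (k + 1) by omega,
    factorization_two_pow_sub (by omega) (by omega)]

lemma xw_le_two (j : ℕ) : xw j ≤ 2 := by
  have := pd_le_one j
  have := pd_le_one (j + 1)
  rcases pd_eq_zero_or_pd_succ_eq_zero j with h | h <;> simp only [xw, h] <;> omega

lemma xw_eq_one_iff (j : ℕ) : xw j = 1 ↔ xw (j + 1) = 2 := by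
  have := pd_le_one j
  have := pd_le_one (j + 1)
  have := pd_le_one (j + 1 + 1)
  have := pd_eq_zero_or_pd_succ_eq_zero j
  have := pd_eq_zero_or_pd_succ_eq_zero (j + 1)
  simp only [xw]
  omega

lemma tauL_two_mul_add {a b : ℕ} (ha : a ≤ 1) (hb : b ≤ 1) : tauL (2 * a + b) = 2 * b + a := by
  interval_cases a <;> interval_cases b <;> rfl

lemma xw_two_pow_sub {s k : ℕ} (hk : k + 3 ≤ 2 ^ s) : xw (2 ^ s - 3 - k) = tauL (xw k) := by
  rw [xw, xw, tauL_two_mul_add (pd_le_one _) (pd_le_one _),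
    show 2 ^ s - 3 - k = 2 ^ s - 2 - (k + 1) by omega, pd_two_pow_sub (by omega),
    show 2 ^ s - 2 - (k + 1) + 1 = 2 ^ s - 2 - k by omega, pd_two_pow_sub (by omega)]

lemma exists_factorAt_xw_eq_reverse_map (i n : ℕ) :
    ∃ j, factorAt xw j n = ((factorAt xw i n).map tauL).reverse := by
  obtain ⟨s, hs⟩ : ∃ s, i + n + 2 < 2 ^ s := ⟨_, Nat.lt_two_pow_self⟩
  refine ⟨2 ^ s - (i + n + 2), factorAt_eq_reverse_map xw fun k hk => ?_⟩
  rw [← xw_two_pow_sub (s := s) (k := i + (n - 1 - k)) (by omega)]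
  congr 1
  omega

end PeriodDoubling

section Windows

variable (i n : ℕ)

lemma le_two_of_mem_factorAt_xw : ∀ b ∈ factorAt xw i n, b ≤ 2 := by
  intro b h
  obtain ⟨k, -, rfl⟩ := List.mem_map.mp h
  exact xw_le_two _

lemma count_factorAt_xw_sum :
    (factorAt xw i n).count 0 + (factorAt xw i n).count 1 + (factorAt xw i n).count 2 = n := by
  rw [count_zero_add_count_one_add_count_two (le_two_of_mem_factorAt_xw i n), length_factorAt]

lemma abs_count_one_sub_count_two_le :
    |((factorAt xw i n).count 1 : ℤ) - (factorAt xw i n).count 2| ≤ 1 := by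
  rw [count_factorAt_eq_count_factorAt_succ xw xw_eq_one_iff]
  exact abs_count_factorAt_succ_sub_le xw 2 i n

lemma exists_factorAt_xw_swap_count_one_two :
    ∃ j, (factorAt xw j n).count 0 = (factorAt xw i n).count 0 ∧
      (factorAt xw j n).count 1 = (factorAt xw i n).count 2 ∧
      (factorAt xw j n).count 2 = (factorAt xw i n).count 1 := by
  obtain ⟨j, hj⟩ := exists_factorAt_xw_eq_reverse_map i n
  have hτ : Function.Injective tauL := Function.LeftInverse.injective (g := tauL) fun a => by
    rcases a with _ | _ | _ | a <;> rfl
  refine ⟨j, ?_, ?_, ?_⟩ <;> rw [hj, List.count_reverse]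
  exacts [List.count_map_of_injective _ _ hτ 0, List.count_map_of_injective _ _ hτ 2,
    List.count_map_of_injective _ _ hτ 1]

lemma bddAbove_count_zero : BddAbove {k | ∃ i, (factorAt xw i n).count 0 = k} :=
  by
  refine ⟨n, ?_⟩
  rintro _ ⟨i, rfl⟩
  exact count_factorAt_le xw 0 i n

lemma count_zero_le_M0 : (factorAt xw i n).count 0 ≤ M0 n :=
  le_csSup (bddAbove_count_zero n) ⟨i, rfl⟩

lemma m0_le_count_zero : m0 n ≤ (factorAt xw i n).count 0 :=
  Nat.sInf_le ⟨i, rfl⟩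

lemma exists_count_zero_eq_M0 : ∃ i, (factorAt xw i n).count 0 = M0 n :=
  Nat.sSup_mem (s := {k | ∃ i, (factorAt xw i n).count 0 = k}) ⟨_, 0, rfl⟩
    (bddAbove_count_zero n)

lemma exists_count_zero_eq_m0 : ∃ i, (factorAt xw i n).count 0 = m0 n :=
  Nat.sInf_mem (s := {k | ∃ i, (factorAt xw i n).count 0 = k}) ⟨_, 0, rfl⟩

lemma m0_le_M0 : m0 n ≤ M0 n :=
  (m0_le_count_zero 0 n).trans (count_zero_le_M0 0 n)

lemma M0_le : M0 n ≤ n := by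
  obtain ⟨i, hi⟩ := exists_count_zero_eq_M0 n
  exact hi ▸ count_factorAt_le xw 0 i n

lemma exists_count_zero_eq {c : ℕ} (h₁ : m0 n ≤ c) (h₂ : c ≤ M0 n) :
    ∃ i, (factorAt xw i n).count 0 = c := by
  obtain ⟨p, hp⟩ := exists_count_zero_eq_m0 n
  obtain ⟨q, hq⟩ := exists_count_zero_eq_M0 n
  obtain ⟨i, hi⟩ := exists_eq_of_abs_sub_succ_le_one
    (f := fun i => ((factorAt xw i n).count 0 : ℤ)) (fun i => abs_count_factorAt_succ_sub_le xw 0 i n)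
    (p := p) (q := q) (c := c) (by omega) (by omega)
  exact ⟨i, by omega⟩

end Windows

def zeroTwoBalance (u : List ℕ) : ℤ := u.count 0 - u.count 2

lemma abComplexity_xw_eq_ncard (n : ℕ) :
    abComplexity xw n = (Set.range fun i => zeroTwoBalance (factorAt xw i n)).ncard := by
  have hinj : Set.InjOn (fun m : Multiset ℕ => (m.count 0 : ℤ) - m.count 2)
      (Set.range fun i => (factorAt xw i n : Multiset ℕ)) := by
    rintro _ ⟨i, rfl⟩ _ ⟨j, rfl⟩ h
    simp only [Multiset.coe_count] at h
    have := count_factorAt_xw_sum i n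
    have := count_factorAt_xw_sum j n
    have := abs_le.mp (abs_count_one_sub_count_two_le i n)
    have := abs_le.mp (abs_count_one_sub_count_two_le j n)
    exact coe_eq_coe_of_count_eq (le_two_of_mem_factorAt_xw i n)
      (le_two_of_mem_factorAt_xw j n) (by omega) (by omega) (by omega)
  unfold abComplexity
  change (Set.range fun i => (factorAt xw i n : Multiset ℕ)).ncard = _
  rw [← hinj.ncard_image, ← Set.range_comp]
  simp only [Function.comp_def, Multiset.coe_count, zeroTwoBalance]

/-- The endpoints are attained at `|u|₀ = m₀(n)`, resp. `M₀(n)`, with `|u|₁ - |u|₂` as small,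
resp. as large, as allowed by `|u|₁ - |u|₂ ≡ n - |u|₀ (mod 2)`. -/
lemma range_zeroTwoBalance_factorAt_xw (n : ℕ) :
    Set.range (fun i => zeroTwoBalance (factorAt xw i n)) =
      Set.Icc ((3 * m0 n - n - (n - m0 n) % 2 : ℤ) / 2)
        ((3 * M0 n - n + (n - M0 n) % 2 : ℤ) / 2) := by
  ext e
  constructor
  · rintro ⟨i, rfl⟩
    have := count_factorAt_xw_sum i n
    have := abs_le.mp (abs_count_one_sub_count_two_le i n)
    have := m0_le_count_zero i n
    have := count_zero_le_M0 i n
    simp only [zeroTwoBalance, Set.mem_Icc]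
    omega
  · rintro ⟨hlo, hhi⟩
    -- `2e + n = 3|u|₀ + (|u|₁ - |u|₂)`, so rounding `(2e + n) / 3` gives the number of `0`s.
    obtain ⟨c, hc⟩ : ∃ c : ℕ, (c : ℤ) = (2 * e + n + 1) / 3 :=
      ⟨_, Int.toNat_of_nonneg (by omega)⟩
    obtain ⟨i, hi⟩ := exists_count_zero_eq n (c := c) (by omega) (by omega)
    obtain ⟨j, hj0, hj1, hj2⟩ := exists_factorAt_xw_swap_count_one_two i n
    have := count_factorAt_xw_sum i n
    have := abs_le.mp (abs_count_one_sub_count_two_le i n)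
    by_cases hd : ((factorAt xw i n).count 1 : ℤ) - (factorAt xw i n).count 2 = 2 * e + n - 3 * c
    · exact ⟨i, by simp only [zeroTwoBalance]; omega⟩
    · exact ⟨j, by simp only [zeroTwoBalance]; omega⟩

lemma two_mul_abComplexity_xw (n : ℕ) :
    2 * abComplexity xw n = 3 * D0 n + 2 + (n - m0 n) % 2 + (n - M0 n) % 2 := by
  have := m0_le_M0 n
  have := M0_le n
  rw [abComplexity_xw_eq_ncard, range_zeroTwoBalance_factorAt_xw, ← Finset.coe_Icc,
    Set.ncard_coe_finset, Int.card_Icc, D0]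
  omega

theorem stmt3 (n : ℕ) :
    (Odd (D0 n) → 2 * abComplexity xw n = 3 * D0 n + 3) ∧
    (Even (D0 n) → Even (n - m0 n) → 2 * abComplexity xw n = 3 * D0 n + 2) ∧
    (Even (D0 n) → Odd (n - m0 n) → 2 * abComplexity xw n = 3 * D0 n + 4) := by
  have := two_mul_abComplexity_xw n
  have := m0_le_M0 n
  have := M0_le n
  have hD : D0 n = M0 n - m0 n := rfl
  simp only [Nat.odd_iff, Nat.even_iff]
  omega
end
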